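/- In the ε-BMC update, if e_U ≤ e_Q and the previous mean m' ∈ [0,1], then the new mean satisfies m = m'·r/(r+1) · (e_U·(m'r+1) + e_Q·(1-m')r)/((e_U·m' + e_Q·(1-m'))·r) ≤ m', for any r > 0. -/

import Mathlib

/-!
Writing `D = e_U m' + e_Q (1 - m')` for the evidence of the mixture, the update is
`m = m' (D r + e_U) / ((r + 1) D)`, so it does not increase the mean exactly when `e_U ≤ D`,
i.e. when the uniform model explains the return no better than the mixture does.
-/

lemma le_mul_add_mul_one_sub {a b t : ℝ} (hab : a ≤ b) (ht1 : t ≤ 1) :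
    a ≤ a * t + b * (1 - t) := by
  nlinarith [mul_le_mul_of_nonneg_right hab (sub_nonneg.2 ht1)]

lemma mul_add_div_add_one_mul_le_one {D e r : ℝ} (hD : 0 < D) (heD : e ≤ D) (hr : 0 ≤ r) :
    (D * r + e) / ((r + 1) * D) ≤ 1 := by
  rw [div_le_one (by positivity)]
  linarith

lemma bmc_update_eq {m' r eU eQ : ℝ} (hr : r ≠ 0) (hr1 : r + 1 ≠ 0) :
    m' * r / (r + 1) *
        ((eU * (m' * r + 1) + eQ * ((1 - m') * r)) / ((eU * m' + eQ * (1 - m')) * r)) =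
      m' * (((eU * m' + eQ * (1 - m')) * r + eU) / ((r + 1) * (eU * m' + eQ * (1 - m')))) := by
  field_simp
  ring

theorem stmt5_general (m' r eU eQ : ℝ) (hm : m' ∈ Set.Icc (0:ℝ) 1) (hr : 0 < r)
    (heU : 0 < eU) (h : eU ≤ eQ) :
    m' * r / (r + 1) *
        ((eU * (m' * r + 1) + eQ * ((1 - m') * r)) / ((eU * m' + eQ * (1 - m')) * r)) ≤ m' := by
  obtain ⟨hm0, hm1⟩ := hm
  have hmix : eU ≤ eU * m' + eQ * (1 - m') := le_mul_add_mul_one_sub h hm1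
  have hD : 0 < eU * m' + eQ * (1 - m') := heU.trans_le hmix
  rw [bmc_update_eq hr.ne' (by positivity)]
  exact mul_le_of_le_one_right hm0 (mul_add_div_add_one_mul_le_one hD hmix hr.le)

theorem stmt5 (m' r eU eQ : ℝ) (hm : m' ∈ Set.Icc (0:ℝ) 1) (hr : 0 < r)
    (heU : 0 < eU) (heQ : 0 < eQ) (h : eU ≤ eQ) :
    m' * r / (r + 1) *
        ((eU * (m' * r + 1) + eQ * ((1 - m') * r)) / ((eU * m' + eQ * (1 - m')) * r)) ≤ m' :=
  stmt5_general m' r eU eQ hm hr heU h
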